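/- Let X and Y be nonzero real or complex Banach spaces. If the direct sum X ⊕_∞ Y (the product X × Y with the norm ‖(x, y)‖ = max{‖x‖, ‖y‖}) is lush, then both X and Y are lush. -/

import Mathlib

open scoped BigOperators

/-- The open slice `S(B_X, f, α) = {x ∈ B_X : Re f(x) > 1 - α}` of the closed unit ball. -/
def Slice (𝕜 : Type*) {X : Type*} [RCLike 𝕜] [NormedAddCommGroup X] [NormedSpace 𝕜 X]
    (f : X →L[𝕜] 𝕜) (α : ℝ) : Set X :=
  {x | ‖x‖ ≤ 1 ∧ 1 - α < RCLike.re (f x)}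

/-- The convex hull of `𝕋 · S(B_X, f, α)`, i.e. all convex combinations of rotated points of
the slice `S(B_X, f, α)`. -/
def ConvRotSlice (𝕜 : Type*) {X : Type*} [RCLike 𝕜] [NormedAddCommGroup X] [NormedSpace 𝕜 X]
    (f : X →L[𝕜] 𝕜) (α : ℝ) : Set X :=
  {x | ∃ (n : ℕ) (t : Fin n → ℝ) (ω : Fin n → 𝕜) (s : Fin n → X),
    (∀ k, 0 ≤ t k) ∧ (∑ k, t k) = 1 ∧ (∀ k, ‖ω k‖ = 1) ∧ (∀ k, s k ∈ Slice 𝕜 f α) ∧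
    x = ∑ k, ((t k : 𝕜) * ω k) • s k}

/-- A Banach space `X` over `𝕜 = ℝ` or `ℂ` is *lush* if for all `u, v` in the unit sphere and
every `ε > 0` there is a norm-one functional `f` with `u ∈ S(B_X, f, ε)` and
`dist(v, conv(𝕋 · S(B_X, f, ε))) < ε`. -/
def IsLush (𝕜 X : Type*) [RCLike 𝕜] [NormedAddCommGroup X] [NormedSpace 𝕜 X] : Prop :=
  ∀ u v : X, ‖u‖ = 1 → ‖v‖ = 1 → ∀ ε : ℝ, 0 < ε →
    ∃ f : X →L[𝕜] 𝕜, ‖f‖ = 1 ∧ u ∈ Slice 𝕜 f ε ∧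
      Metric.infDist v (ConvRotSlice 𝕜 f ε) < ε


/-! `X` is the range of the M-projection `P (x, y) = (x, 0)` on `X ⊕_∞ Y`, and lushness passes
to M-summands. Dually, every functional `F` on the sum satisfies `‖F ∘ P‖ + ‖F ∘ (1 - P)‖ ≤ ‖F‖`.
So if `‖F‖ = 1` and the `ε'`-slice of `F` contains `(u, 0)`, the restriction of `F` to `X` has
norm `c > 1 - ε'`, and the projection onto `X`, being linear and 1-Lipschitz, maps the
`ε'`-slice of `F` into the `ε' / c`-slice of the normalised restriction. It therefore carries the
rotated convex hull of the one slice into that of the other without increasing the distance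
to `v`. -/

open Metric Set

section MProjection

variable {𝕜 Z : Type*} [RCLike 𝕜] [NormedAddCommGroup Z] [NormedSpace 𝕜 Z] {P : Z →L[𝕜] Z}

lemma IsMprojection.norm_apply_le (hP : IsMprojection Z P) (z : Z) : ‖P z‖ ≤ ‖z‖ :=
  (hP.Mnorm z).symm ▸ le_max_left _ _

lemma IsMprojection.norm_one_sub_apply_le (hP : IsMprojection Z P) (z : Z) :
    ‖(1 - P) z‖ ≤ ‖z‖ :=
  (hP.Mnorm z).symm ▸ le_max_right _ _

lemma IsMprojection.apply_apply (hP : IsMprojection Z P) (z : Z) : P (P z) = P z :=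
  congrArg (· z) hP.proj.eq

/-- Rotating `x` and `y` so that `F` is real and nonnegative at `P x` and `(1 - P) y` gives a
point of the unit ball at which `F` equals the sum of the two moduli. -/
lemma IsMprojection.norm_apply_add_norm_apply_le (hP : IsMprojection Z P) (F : Z →L[𝕜] 𝕜)
    {x y : Z} (hx : ‖x‖ ≤ 1) (hy : ‖y‖ ≤ 1) : ‖F (P x)‖ + ‖F ((1 - P) y)‖ ≤ ‖F‖ := by
  obtain ⟨ω₁, hω₁, hFx⟩ := RCLike.exists_norm_eq_mul_self (F (P x))
  obtain ⟨ω₂, hω₂, hFy⟩ := RCLike.exists_norm_eq_mul_self (F ((1 - P) y))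
  set a := P (ω₁ • x)
  set b := (1 - P) (ω₂ • y)
  have hPa : P a = a := hP.apply_apply _
  have hPb : P b = 0 := by simp [b, hP.apply_apply]
  have hab : ‖a + b‖ ≤ 1 := by
    have hsplit := hP.Mnorm (a + b)
    simp only [ContinuousLinearMap.smul_def, map_add, hPa, hPb, sub_apply, one_apply_eq_self,
      add_zero, sub_self, zero_add, sub_zero] at hsplit
    rw [hsplit, max_le_iff]
    exact ⟨(hP.norm_apply_le _).trans (by rwa [norm_smul, hω₁, one_mul]),
      (hP.norm_one_sub_apply_le _).trans (by rwa [norm_smul, hω₂, one_mul])⟩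
  have hFab : F (a + b) = (‖F (P x)‖ : 𝕜) + ‖F ((1 - P) y)‖ := by
    simp only [a, b, map_add, map_smul, smul_eq_mul, hFx, hFy]
  calc ‖F (P x)‖ + ‖F ((1 - P) y)‖ = ‖F (a + b)‖ := by
        rw [hFab, ← RCLike.ofReal_add, RCLike.norm_ofReal, abs_of_nonneg (by positivity)]
    _ ≤ ‖F‖ := by simpa using F.le_opNorm_of_le hab

lemma IsMprojection.norm_comp_add_norm_comp_one_sub_le (hP : IsMprojection Z P)
    (F : Z →L[𝕜] 𝕜) : ‖F.comp P‖ + ‖F.comp (1 - P)‖ ≤ ‖F‖ := by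
  have hcomp_le : ∀ y : Z, ‖y‖ ≤ 1 → ‖F.comp P‖ ≤ ‖F‖ - ‖F ((1 - P) y)‖ := fun y hy =>
    ContinuousLinearMap.opNorm_le_of_unit_norm
      (by linarith [hP.norm_apply_add_norm_apply_le F (by simp : ‖(0 : Z)‖ ≤ 1) hy,
        norm_nonneg (F (P 0))])
      fun x hx => le_sub_iff_add_le.2 (hP.norm_apply_add_norm_apply_le F hx.le hy)
  have hFP : ‖F.comp P‖ ≤ ‖F‖ := by simpa using hcomp_le 0 (by simp)
  have hFQ : ‖F.comp (1 - P)‖ ≤ ‖F‖ - ‖F.comp P‖ :=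
    ContinuousLinearMap.opNorm_le_of_unit_norm (sub_nonneg.2 hFP)
      fun y hy => le_sub_comm.1 (hcomp_le y hy.le)
  linarith

end MProjection

lemma LipschitzWith.infDist_apply_le_of_mapsTo {α β : Type*} [PseudoMetricSpace α]
    [PseudoMetricSpace β] {f : α → β} (hf : LipschitzWith 1 f) {s : Set α} {t : Set β}
    (hst : MapsTo f s t) (hs : s.Nonempty) (x : α) : infDist (f x) t ≤ infDist x s :=
  (le_infDist hs).2 fun y hy =>
    (infDist_le_dist_of_mem (hst hy)).trans (by simpa using hf.dist_le_mul x y)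

section Slice

variable {𝕜 X Y : Type*} [RCLike 𝕜] [NormedAddCommGroup X] [NormedSpace 𝕜 X]
  [NormedAddCommGroup Y] [NormedSpace 𝕜 Y]

lemma slice_mono {f : X →L[𝕜] 𝕜} {α β : ℝ} (h : α ≤ β) : Slice 𝕜 f α ⊆ Slice 𝕜 f β :=
  fun _ hx => ⟨hx.1, by linarith [hx.2]⟩

lemma slice_subset_convRotSlice (f : X →L[𝕜] 𝕜) (α : ℝ) : Slice 𝕜 f α ⊆ ConvRotSlice 𝕜 f α :=
  fun x hx => ⟨1, 1, 1, fun _ => x, fun _ => zero_le_one, by simp, fun _ => norm_one,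
    fun _ => hx, by simp⟩

lemma mapsTo_convRotSlice (T : X →ₗ[𝕜] Y) {f : X →L[𝕜] 𝕜} {g : Y →L[𝕜] 𝕜} {α β : ℝ}
    (h : MapsTo T (Slice 𝕜 f α) (Slice 𝕜 g β)) :
    MapsTo T (ConvRotSlice 𝕜 f α) (ConvRotSlice 𝕜 g β) := by
  rintro _ ⟨n, t, ω, s, ht, ht1, hω, hs, rfl⟩
  exact ⟨n, t, ω, T ∘ s, ht, ht1, hω, fun k => h (hs k), by simp [map_sum]⟩

end Slice

section MSummand

variable {𝕜 X Z : Type*} [RCLike 𝕜] [NormedAddCommGroup X] [NormedSpace 𝕜 X]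
  [NormedAddCommGroup Z] [NormedSpace 𝕜 Z] {ι : X →L[𝕜] Z} {π : Z →L[𝕜] X}

lemma norm_apply_le_of_isMprojection_comp (hι : ∀ x, ‖ι x‖ = ‖x‖)
    (hP : IsMprojection Z (ι.comp π)) (z : Z) : ‖π z‖ ≤ ‖z‖ :=
  hι (π z) ▸ hP.norm_apply_le z

lemma norm_comp_le_norm_comp_comp {W : Type*} [NormedAddCommGroup W] [NormedSpace 𝕜 W]
    (hι : ∀ x, ‖ι x‖ = ‖x‖) (hπι : ∀ x, π (ι x) = x) (G : Z →L[𝕜] W) :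
    ‖G.comp ι‖ ≤ ‖G.comp (ι.comp π)‖ :=
  ContinuousLinearMap.opNorm_le_bound _ (norm_nonneg _) fun x => by
    simpa [hπι, hι] using (G.comp (ι.comp π)).le_opNorm (ι x)

/-- On the slice of `F`, the part of `F` living on the complementary summand is at most
`1 - ‖F ∘ ι‖`, so the normalised restriction `F ∘ ι / ‖F ∘ ι‖` stays large on the projection. -/
lemma mapsTo_slice_of_isMprojection_comp (hι : ∀ x, ‖ι x‖ = ‖x‖) (hπι : ∀ x, π (ι x) = x)
    (hP : IsMprojection Z (ι.comp π)) {F : Z →L[𝕜] 𝕜} (hF : ‖F‖ ≤ 1)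
    (hc : 0 < ‖F.comp ι‖) (α : ℝ) :
    MapsTo π (Slice 𝕜 F α)
      (Slice 𝕜 ((‖F.comp ι‖⁻¹ : 𝕜) • F.comp ι) (α / ‖F.comp ι‖)) := by
  rintro z ⟨hz, hFz⟩
  set c := ‖F.comp ι‖
  have hsplit : F z = F (ι (π z)) + F.comp (1 - ι.comp π) z := by simp
  have hrest : RCLike.re (F.comp (1 - ι.comp π) z) ≤ 1 - c := by
    have hQz := ((F.comp (1 - ι.comp π)).le_opNorm_of_le hz).trans_eq (mul_one _)
    linarith [RCLike.re_le_norm (F.comp (1 - ι.comp π) z),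
      hP.norm_comp_add_norm_comp_one_sub_le F, norm_comp_le_norm_comp_comp hι hπι F]
  have hmain : c - α < RCLike.re (F (ι (π z))) := by
    rw [hsplit, map_add] at hFz
    linarith
  refine ⟨(norm_apply_le_of_isMprojection_comp hι hP z).trans hz, ?_⟩
  calc 1 - α / c = c⁻¹ * (c - α) := by field_simp
    _ < c⁻¹ * RCLike.re (F (ι (π z))) := by gcongr
    _ = RCLike.re (((c⁻¹ : ℝ) : 𝕜) • F.comp ι (π z)) := by
        rw [smul_eq_mul, RCLike.re_ofReal_mul]; rfl
    _ = _ := by simp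

theorem IsLush.of_isMprojection_comp (hZ : IsLush 𝕜 Z) (hι : ∀ x, ‖ι x‖ = ‖x‖)
    (hπι : ∀ x, π (ι x) = x) (hP : IsMprojection Z (ι.comp π)) : IsLush 𝕜 X := by
  intro u v hu hv ε hε
  -- chosen so that `1 - ε' < c` forces `ε' / c ≤ ε`
  set ε' := ε / (1 + ε)
  obtain ⟨F, hF, hFu, hdist⟩ :=
    hZ (ι u) (ι v) ((hι u).trans hu) ((hι v).trans hv) ε' (by positivity)
  set c := ‖F.comp ι‖
  have hc : 1 - ε' < c := hFu.2.trans_le <| (RCLike.re_le_norm _).trans <|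
    ((F.comp ι).le_opNorm_of_le hu.le).trans_eq (mul_one c)
  have hc₀ : 0 < c := by
    have : ε' < 1 := (div_lt_one (by positivity)).2 (by linarith)
    linarith
  have hε'c : ε' / c ≤ ε := by
    rw [div_le_iff₀ hc₀]
    calc ε' = ε * (1 - ε') := by simp only [ε']; field_simp; ring
      _ ≤ ε * c := by gcongr
  have hmaps : MapsTo π (Slice 𝕜 F ε') (Slice 𝕜 ((c⁻¹ : 𝕜) • F.comp ι) ε) :=
    (mapsTo_slice_of_isMprojection_comp hι hπι hP hF.le hc₀ ε').mono_right (slice_mono hε'c)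
  have hπ : LipschitzWith 1 π := .of_dist_le_mul fun z w => by
    simpa [dist_eq_norm, ← map_sub] using norm_apply_le_of_isMprojection_comp hι hP (z - w)
  refine ⟨_, norm_smul_inv_norm (norm_pos_iff.1 hc₀), hπι u ▸ hmaps hFu, ?_⟩
  calc infDist v (ConvRotSlice 𝕜 _ ε) = infDist (π (ι v)) (ConvRotSlice 𝕜 _ ε) := by rw [hπι]
    _ ≤ infDist (ι v) (ConvRotSlice 𝕜 F ε') :=
        hπ.infDist_apply_le_of_mapsTo (mapsTo_convRotSlice (π : Z →ₗ[𝕜] X) hmaps)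
          ⟨ι u, slice_subset_convRotSlice F ε' hFu⟩ (ι v)
    _ < ε' := hdist
    _ ≤ ε := div_le_self hε.le (by linarith)

end MSummand

namespace WithLp

section Inclusions

variable (p : ENNReal) (𝕜 X Y : Type*) [Semiring 𝕜] [TopologicalSpace X] [AddCommGroup X]
  [Module 𝕜 X] [TopologicalSpace Y] [AddCommGroup Y] [Module 𝕜 Y]

noncomputable def inlL : X →L[𝕜] WithLp p (X × Y) :=
  (prodContinuousLinearEquiv p 𝕜 X Y).symm.toContinuousLinearMap.comp (.inl 𝕜 X Y)

noncomputable def inrL : Y →L[𝕜] WithLp p (X × Y) :=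
  (prodContinuousLinearEquiv p 𝕜 X Y).symm.toContinuousLinearMap.comp (.inr 𝕜 X Y)

@[simp] lemma inlL_apply (x : X) : inlL p 𝕜 X Y x = toLp p (x, 0) := rfl

@[simp] lemma inrL_apply (y : Y) : inrL p 𝕜 X Y y = toLp p (0, y) := rfl

end Inclusions

variable (𝕜 X Y : Type*) [RCLike 𝕜] [NormedAddCommGroup X] [NormedSpace 𝕜 X]
  [NormedAddCommGroup Y] [NormedSpace 𝕜 Y]

lemma isMprojection_inlL_comp_fstL :
    IsMprojection (WithLp ⊤ (X × Y)) ((inlL ⊤ 𝕜 X Y).comp (fstL ⊤ 𝕜 X Y)) where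
  proj := ContinuousLinearMap.ext fun _ => rfl
  Mnorm z := by
    have : z - toLp ⊤ (z.fst, 0) = toLp ⊤ (0, z.snd) := by
      rw [WithLp.ext_iff]; ext <;> simp
    simp [ContinuousLinearMap.smul_def, this, prod_norm_eq_sup z, norm_toLp_fst, norm_toLp_snd]

lemma isMprojection_inrL_comp_sndL :
    IsMprojection (WithLp ⊤ (X × Y)) ((inrL ⊤ 𝕜 X Y).comp (sndL ⊤ 𝕜 X Y)) where
  proj := ContinuousLinearMap.ext fun _ => rfl
  Mnorm z := by
    have : z - toLp ⊤ (0, z.snd) = toLp ⊤ (z.fst, 0) := by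
      rw [WithLp.ext_iff]; ext <;> simp
    simp [ContinuousLinearMap.smul_def, this, prod_norm_eq_sup z, norm_toLp_fst, norm_toLp_snd,
      max_comm]

end WithLp

theorem isLush_of_isLush_prod_sup_general {𝕜 X Y : Type*} [RCLike 𝕜]
    [NormedAddCommGroup X] [NormedSpace 𝕜 X]
    [NormedAddCommGroup Y] [NormedSpace 𝕜 Y]
    (h : IsLush 𝕜 (WithLp ⊤ (X × Y))) : IsLush 𝕜 X ∧ IsLush 𝕜 Y :=
  ⟨h.of_isMprojection_comp (WithLp.norm_toLp_fst ⊤ X Y) (fun _ => rfl)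
      (WithLp.isMprojection_inlL_comp_fstL 𝕜 X Y),
    h.of_isMprojection_comp (WithLp.norm_toLp_snd ⊤ X Y) (fun _ => rfl)
      (WithLp.isMprojection_inrL_comp_sndL 𝕜 X Y)⟩

/-- If `X ⊕_∞ Y` (the product with norm `‖(x,y)‖ = max (‖x‖, ‖y‖)`, i.e. `WithLp ⊤ (X × Y)`)
is lush, then both `X` and `Y` are lush. -/
theorem isLush_of_isLush_prod_sup {𝕜 X Y : Type*} [RCLike 𝕜]
    [NormedAddCommGroup X] [NormedSpace 𝕜 X] [CompleteSpace X] [Nontrivial X]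
    [NormedAddCommGroup Y] [NormedSpace 𝕜 Y] [CompleteSpace Y] [Nontrivial Y]
    (h : IsLush 𝕜 (WithLp ⊤ (X × Y))) : IsLush 𝕜 X ∧ IsLush 𝕜 Y :=
  isLush_of_isLush_prod_sup_general h
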